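/- Convergence of iterated LPA to the oracle: with the notation above, writing A_𝒮 for the stacked matrix with block rows (I_n − P_{s_i})R_i, the powers M_A^k converge as k → ∞ to the orthogonal projector onto ker A_𝒮. Consequently, iterating the patch-averaging map on any y ∈ ℝ^N converges to the orthogonal projection of y onto ker A_𝒮. -/

import Mathlib

open Matrix

noncomputable section

/-- Cyclic patch-extraction operator: extracts the `n` consecutive coordinates of a signal of
length `N` starting at position `i`, indices taken modulo `N`. -/
def Rop (N n : ℕ) (i : Fin N) : Matrix (Fin n) (Fin N) ℝ :=
  Matrix.of fun k j => if (j : ℕ) = ((i : ℕ) + (k : ℕ)) % N then 1 else 0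

/-- Global convolutional dictionary: horizontal concatenation of the blocks `(1/n) • Rᵢᵀ D`. -/
def DG (N n m : ℕ) (D : Matrix (Fin n) (Fin m) ℝ) : Matrix (Fin N) (Fin N × Fin m) ℝ :=
  Matrix.of fun x p => ((1 / (n : ℝ)) • ((Rop N n p.1)ᵀ * D)) x p.2

/-- `Qᵢ` places `D` in block position `i` and zeros elsewhere. -/
def Qop (N n m : ℕ) (D : Matrix (Fin n) (Fin m) ℝ) (i : Fin N) :
    Matrix (Fin n) (Fin N × Fin m) ℝ :=
  Matrix.of fun k p => if p.1 = i then D k p.2 else 0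

/-- Patch-agreement constraint matrix `M`: block rows `Qᵢ - Rᵢ D_G`. -/
def Mop (N n m : ℕ) (D : Matrix (Fin n) (Fin m) ℝ) :
    Matrix (Fin N × Fin n) (Fin N × Fin m) ℝ :=
  Matrix.of fun q p => (Qop N n m D q.1 - Rop N n q.1 * DG N n m D) q.2 p

/-- Bottom extraction operator `S_B = [0  I_{n-1}]`. -/
def SBop (n : ℕ) : Matrix (Fin (n - 1)) (Fin n) ℝ :=
  Matrix.of fun r j => if (j : ℕ) = (r : ℕ) + 1 then 1 else 0

/-- Top extraction operator `S_T = [I_{n-1}  0]`. -/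
def STop (n : ℕ) : Matrix (Fin (n - 1)) (Fin n) ℝ :=
  Matrix.of fun r j => if (j : ℕ) = (r : ℕ) then 1 else 0

/-- `ℓ₀` pseudo-norm: the number of nonzero entries. -/
def l0 {m : ℕ} (α : Fin m → ℝ) : ℕ := (Function.support α).ncard

/-- The support of a vector, as a `Finset`. -/
def suppF {m : ℕ} (α : Fin m → ℝ) : Finset (Fin m) :=
  (Set.toFinite (Function.support α)).toFinset

/-- The spark of a dictionary: the minimal number of linearly dependent columns (`⊤` if the
columns are linearly independent). -/
def spark {n m : ℕ} (D : Matrix (Fin n) (Fin m) ℝ) : ℕ∞ :=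
  sInf {j : ℕ∞ | ∃ s : Finset (Fin m), (s.card : ℕ∞) = j ∧
    (D.submatrix id (fun a : {a // a ∈ s} => (a : Fin m))).rank < s.card}

/-- The globalized spark relative to a family `T` of allowed supports. -/
def gspark {n m : ℕ} (D : Matrix (Fin n) (Fin m) ℝ) (T : Set (Finset (Fin m))) : ℕ∞ :=
  sInf {j : ℕ∞ | ∃ s₁ ∈ T, ∃ s₂ ∈ T, (((s₁ ∪ s₂).card : ℕ) : ℕ∞) = j ∧
    (D.submatrix id (fun a : {a // a ∈ s₁ ∪ s₂} => (a : Fin m))).rank < (s₁ ∪ s₂).card}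

/-! Every coordinate lies in exactly `n` cyclic patches, so `∑ᵢ RᵢᵀRᵢ = n • 1` and, the `Pᵢ` being
orthogonal projectors, `A_𝒮ᵀ A_𝒮 = n • (1 - M_A)`. Hence `ker A_𝒮` is the eigenspace of `M_A` for
the eigenvalue `1`, and `0 ≤ M_A ≤ 1` in the Loewner order, both `M_A` and `1 - M_A` being sums of
Gram matrices. In an orthonormal eigenbasis `M_A ^ k = ∑ᵢ μᵢ ^ k • bᵢ bᵢ*` with `μᵢ ∈ [0, 1]`: the
terms with `μᵢ < 1` die out and the others add up to the projection onto that eigenspace. -/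

open Filter Topology InnerProductSpace

theorem OrthonormalBasis.eq_sum_smul_rankOne {𝕜 E ι : Type*} [RCLike 𝕜] [NormedAddCommGroup E]
    [InnerProductSpace 𝕜 E] [Fintype ι] (b : OrthonormalBasis ι 𝕜 E) {f : E →L[𝕜] E}
    {c : ι → 𝕜} (hf : ∀ i, f (b i) = c i • b i) :
    f = ∑ i, c i • rankOne 𝕜 (b i) (b i) :=
  calc f = f ∘L ∑ i, rankOne 𝕜 (b i) (b i) := by rw [b.sum_rankOne_eq_id, f.comp_id]
    _ = ∑ i, c i • rankOne 𝕜 (b i) (b i) := by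
      simp only [ContinuousLinearMap.comp_finsetSum, comp_rankOne, hf, map_smul,
        _root_.smul_apply]

theorem tendsto_pow_atTop_nhds_ite {t : ℝ} (h0 : 0 ≤ t) (h1 : t ≤ 1) :
    Tendsto (fun k : ℕ => t ^ k) atTop (𝓝 (if t = 1 then 1 else 0)) := by
  split_ifs with ht
  · simp [ht]
  · exact tendsto_pow_atTop_nhds_zero_of_lt_one h0 (h1.lt_of_ne ht)

theorem ContinuousLinearMap.tendsto_pow_starProjection_eigenspace_one {𝕜 E : Type*} [RCLike 𝕜]
    [NormedAddCommGroup E] [InnerProductSpace 𝕜 E] [FiniteDimensional 𝕜 E] {T : E →L[𝕜] E}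
    (h0 : 0 ≤ T) (h1 : T ≤ 1) :
    Tendsto (fun k : ℕ => T ^ k) atTop
      (𝓝 (Module.End.eigenspace (T : E →ₗ[𝕜] E) 1).starProjection) := by
  have hT : (T : E →ₗ[𝕜] E).IsPositive := (nonneg_iff_isPositive T).mp h0
  set b := hT.isSymmetric.eigenvectorBasis rfl
  set μ := hT.isSymmetric.eigenvalues rfl
  have hb : ∀ i, T (b i) = (μ i : 𝕜) • b i := hT.isSymmetric.apply_eigenvectorBasis rfl
  have hμ0 : ∀ i, 0 ≤ μ i := hT.nonneg_eigenvalues rfl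
  have hμ1 : ∀ i, μ i ≤ 1 := fun i => by
    simpa [hb, inner_sub_left, inner_smul_left, b.orthonormal.1 i] using
      ((le_def T 1).mp h1).re_inner_nonneg_left (b i)
  have hpow : ∀ k : ℕ, T ^ k = ∑ i, ((μ i ^ k : ℝ) : 𝕜) • rankOne 𝕜 (b i) (b i) := fun k =>
    b.eq_sum_smul_rankOne fun i => by
      have hbk := (hT.isSymmetric.hasEigenvector_eigenvectorBasis rfl i).pow_apply k
      rw [← toLinearMap_pow, coe_coe] at hbk
      rw [hbk, RCLike.ofReal_pow]
  have hproj : (Module.End.eigenspace (T : E →ₗ[𝕜] E) 1).starProjection =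
      ∑ i, ((if μ i = 1 then 1 else 0 : ℝ) : 𝕜) • rankOne 𝕜 (b i) (b i) :=
    b.eq_sum_smul_rankOne fun i => by
      have hbi : b i ∈ Module.End.eigenspace (T : E →ₗ[𝕜] E) (μ i) :=
        Module.End.mem_eigenspace_iff.mpr (hb i)
      split_ifs with h
      · simpa [Submodule.starProjection_eq_self_iff, h] using hbi
      · have hne : (μ i : 𝕜) ≠ 1 := by exact_mod_cast h
        simpa [Submodule.starProjection_apply_eq_zero_iff] using
          (hT.isSymmetric.orthogonalFamily_eigenspaces.isOrtho hne).le hbi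
  rw [funext hpow, hproj]
  refine tendsto_finsetSum _ fun i _ => Tendsto.smul_const ?_ _
  exact (RCLike.continuous_ofReal.tendsto _).comp (tendsto_pow_atTop_nhds_ite (hμ0 i) (hμ1 i))

namespace Matrix

section Stack

variable {ι m n α : Type*} [Fintype ι] [Fintype m]

def stackRows (B : ι → Matrix m n α) : Matrix (ι × m) n α :=
  of fun q j => B q.1 q.2 j

theorem transpose_stackRows_mul_self [NonUnitalNonAssocSemiring α] (B : ι → Matrix m n α) :
    (stackRows B)ᵀ * stackRows B = ∑ i, (B i)ᵀ * B i := by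
  ext j l
  simp [stackRows, mul_apply, Matrix.sum_apply, Fintype.sum_prod_type]

theorem transpose_mul_mul_self_of_isIdempotentElem [CommSemiring α] {P : Matrix m m α}
    (hPt : Pᵀ = P) (hP : IsIdempotentElem P) (R : Matrix m n α) :
    (P * R)ᵀ * (P * R) = Rᵀ * P * R := by
  rw [transpose_mul, hPt, Matrix.mul_assoc, ← Matrix.mul_assoc P, hP.eq, Matrix.mul_assoc]

theorem transpose_stackRows_one_sub_mul_mul_self [DecidableEq m] [CommRing α]
    {P : ι → Matrix m m α} (hPt : ∀ i, (P i)ᵀ = P i) (hP : ∀ i, IsIdempotentElem (P i))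
    (R : ι → Matrix m n α) :
    (stackRows fun i => (1 - P i) * R i)ᵀ * stackRows (fun i => (1 - P i) * R i) =
      ∑ i, (R i)ᵀ * R i - ∑ i, (R i)ᵀ * P i * R i := by
  rw [transpose_stackRows_mul_self, ← Finset.sum_sub_distrib]
  refine Finset.sum_congr rfl fun i _ => ?_
  rw [transpose_mul_mul_self_of_isIdempotentElem (by simp [hPt]) (hP i).one_sub,
    Matrix.mul_sub, Matrix.sub_mul, Matrix.mul_one]

theorem posSemidef_sum_transpose_mul_mul [Fintype n] {P : ι → Matrix m m ℝ}
    (hPt : ∀ i, (P i)ᵀ = P i) (hP : ∀ i, IsIdempotentElem (P i)) (R : ι → Matrix m n ℝ) :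
    (∑ i, (R i)ᵀ * P i * R i).PosSemidef :=
  posSemidef_sum _ fun i _ => by
    rw [← transpose_mul_mul_self_of_isIdempotentElem (hPt i) (hP i)]
    exact posSemidef_conjTranspose_mul_self _

end Stack

section Euclidean

open scoped ComplexOrder

variable {𝕜 m n : Type*} [RCLike 𝕜] [Fintype n] [DecidableEq n]

theorem toEuclideanCLM_le_toEuclideanCLM {A B : Matrix n n 𝕜} (h : (B - A).PosSemidef) :
    toEuclideanCLM (𝕜 := 𝕜) A ≤ toEuclideanCLM (𝕜 := 𝕜) B := by
  rw [ContinuousLinearMap.le_def, ← map_sub, ← ContinuousLinearMap.isPositive_toLinearMap_iff,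
    coe_toEuclideanCLM_eq_toEuclideanLin, isPositive_toEuclideanLin_iff]
  exact h

theorem ker_toEuclideanLin_eq_eigenspace_one [Fintype m] {A : Matrix m n 𝕜} {M : Matrix n n 𝕜}
    {c : 𝕜} (hc : c ≠ 0) (h : Aᴴ * A = c • (1 - M)) :
    LinearMap.ker (toEuclideanLin A) = Module.End.eigenspace (toEuclideanLin M) 1 := by
  ext x
  have hker : A *ᵥ x.ofLp = 0 ↔ M *ᵥ x.ofLp = x.ofLp := by
    rw [← conjTranspose_mul_self_mulVec_eq_zero, h, smul_mulVec, smul_eq_zero_iff_right hc,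
      sub_mulVec, one_mulVec, sub_eq_zero, eq_comm]
  simpa [Module.End.mem_eigenspace_iff, WithLp.ext_iff] using hker

end Euclidean

end Matrix

theorem Rop_apply {N n : ℕ} [NeZero N] (i : Fin N) (k : Fin n) (j : Fin N) :
    Rop N n i k j = if j = i + Fin.ofNat N k then 1 else 0 := by
  simp [Rop, Fin.ext_iff, Fin.val_add]

theorem sum_transpose_Rop_mul_Rop (N n : ℕ) :
    ∑ i, (Rop N n i)ᵀ * Rop N n i = (n : ℝ) • (1 : Matrix (Fin N) (Fin N) ℝ) := by
  ext j l
  have : NeZero N := ⟨j.pos.ne'⟩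
  have hshift : ∀ c : Fin N, ∑ i : Fin N,
      (if j = i + c then (1 : ℝ) else 0) * (if l = i + c then 1 else 0) = if j = l then 1 else 0 :=
    fun c => calc
      _ = ∑ i : Fin N, (if j = i then (1 : ℝ) else 0) * (if l = i then 1 else 0) :=
        Fintype.sum_equiv (Equiv.addRight c) _ _ fun _ => rfl
      _ = _ := by simp
  simp only [Matrix.sum_apply, mul_apply, transpose_apply, Rop_apply]
  rw [Finset.sum_comm]
  simp only [hshift]
  simp [one_apply]

theorem iterated_LPA_converges_general (n N : ℕ) (hn : 0 < n)
    (P : Fin N → Matrix (Fin n) (Fin n) ℝ)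
    (hPsym : ∀ i, (P i)ᵀ = P i) (hPidem : ∀ i, P i * P i = P i)
    (MA : Matrix (Fin N) (Fin N) ℝ)
    (hMA : MA = (1 / (n : ℝ)) • ∑ i, (Rop N n i)ᵀ * P i * Rop N n i)
    (AS : Matrix (Fin N × Fin n) (Fin N) ℝ)
    (hAS : AS = Matrix.of fun q j => (((1 - P q.1) * Rop N n q.1 : Matrix (Fin n) (Fin N) ℝ) q.2 j))
    (K : Submodule ℝ (EuclideanSpace ℝ (Fin N)))
    (hK : K = LinearMap.ker (Matrix.toEuclideanLin AS)) :
    Filter.Tendsto (fun k => Matrix.toEuclideanCLM (𝕜 := ℝ) (MA ^ k)) Filter.atTop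
        (nhds (K.subtypeL.comp (Submodule.orthogonalProjection K))) ∧
      ∀ y : EuclideanSpace ℝ (Fin N),
        Filter.Tendsto (fun k => Matrix.toEuclideanCLM (𝕜 := ℝ) (MA ^ k) y) Filter.atTop
          (nhds ((Submodule.orthogonalProjection K y : K) : EuclideanSpace ℝ (Fin N))) := by
  have hnR : (n : ℝ) ≠ 0 := Nat.cast_ne_zero.mpr hn.ne'
  have hsum : ∑ i, (Rop N n i)ᵀ * P i * Rop N n i = (n : ℝ) • MA := by
    rw [hMA, smul_smul, mul_one_div_cancel hnR, one_smul]
  have hASAS : ASᴴ * AS = (n : ℝ) • (1 - MA) := by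
    have hAS' : AS = stackRows fun i => (1 - P i) * Rop N n i := hAS
    rw [conjTranspose_eq_transpose_of_trivial, hAS',
      transpose_stackRows_one_sub_mul_mul_self hPsym hPidem, sum_transpose_Rop_mul_Rop, hsum,
      smul_sub]
  have hMA_nonneg : MA.PosSemidef := by
    rw [hMA]
    exact (posSemidef_sum_transpose_mul_mul hPsym hPidem _).smul (by positivity)
  have hMA_le_one : (1 - MA).PosSemidef := by
    rw [← inv_smul_smul₀ hnR (1 - MA), ← hASAS]
    exact (posSemidef_conjTranspose_mul_self AS).smul (by positivity)
  have hT0 : 0 ≤ toEuclideanCLM (𝕜 := ℝ) MA := by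
    simpa using toEuclideanCLM_le_toEuclideanCLM (A := 0) (B := MA) (by simpa using hMA_nonneg)
  have hT1 : toEuclideanCLM (𝕜 := ℝ) MA ≤ 1 := by
    simpa using toEuclideanCLM_le_toEuclideanCLM (B := 1) hMA_le_one
  have hK' : K = Module.End.eigenspace (toEuclideanCLM (𝕜 := ℝ) MA : _ →ₗ[ℝ] _) 1 := by
    rw [hK, coe_toEuclideanCLM_eq_toEuclideanLin]
    exact ker_toEuclideanLin_eq_eigenspace_one hnR hASAS
  have hlim := ContinuousLinearMap.tendsto_pow_starProjection_eigenspace_one hT0 hT1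
  simp only [← hK', ← map_pow] at hlim
  exact ⟨hlim, fun y => ((continuous_eval_const y).tendsto _).comp hlim⟩

/-- Convergence of iterated LPA to the oracle: `M_A^k` converges to the orthogonal projector
onto `ker A_𝒮`; consequently iterated patch averaging of any `y` converges to the orthogonal
projection of `y` onto `ker A_𝒮`. -/
theorem iterated_LPA_converges (n N : ℕ) (hn : 0 < n) (hdvd : n ∣ N)
    (P : Fin N → Matrix (Fin n) (Fin n) ℝ)
    (hPsym : ∀ i, (P i)ᵀ = P i) (hPidem : ∀ i, P i * P i = P i)
    (MA : Matrix (Fin N) (Fin N) ℝ)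
    (hMA : MA = (1 / (n : ℝ)) • ∑ i, (Rop N n i)ᵀ * P i * Rop N n i)
    (AS : Matrix (Fin N × Fin n) (Fin N) ℝ)
    (hAS : AS = Matrix.of fun q j => (((1 - P q.1) * Rop N n q.1 : Matrix (Fin n) (Fin N) ℝ) q.2 j))
    (K : Submodule ℝ (EuclideanSpace ℝ (Fin N)))
    (hK : K = LinearMap.ker (Matrix.toEuclideanLin AS)) :
    Filter.Tendsto (fun k => Matrix.toEuclideanCLM (𝕜 := ℝ) (MA ^ k)) Filter.atTop
        (nhds (K.subtypeL.comp (Submodule.orthogonalProjection K))) ∧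
      ∀ y : EuclideanSpace ℝ (Fin N),
        Filter.Tendsto (fun k => Matrix.toEuclideanCLM (𝕜 := ℝ) (MA ^ k) y) Filter.atTop
          (nhds ((Submodule.orthogonalProjection K y : K) : EuclideanSpace ℝ (Fin N))) :=
  iterated_LPA_converges_general n N hn P hPsym hPidem MA hMA AS hAS K hK

end
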